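/- Let A be a commutative ring, J a finitely generated ideal. Define the weak completion A^† of A inside the J-adic completion Â as the union over ε > 0 of the subsets A_ε = {f ∈ Â : γ_ε(f) > −∞} (with respect to a fixed presentation by generators). Then A^† is a subring of Â: it is closed under addition and multiplication. -/

import Mathlib

/-- The `J`-adic valuation `v_J(a) = sup {n : a ∈ J^n} ∈ ℕ ∪ {∞}`, viewed in `EReal`. -/
noncomputable def vJ {A : Type*} [CommRing A] (J : Ideal A) (a : A) : EReal :=
  ⨆ n : {n : ℕ // a ∈ J ^ n}, ((n : ℕ) : EReal)

/-- The Gauss norm `γ_ε(∑_I a_I T^I) = inf_I (v_J(a_I) − ε·|I|)`. -/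
noncomputable def gaussNorm {A : Type*} [CommRing A] (J : Ideal A) {r : ℕ} (ε : ℝ)
    (f : MvPowerSeries (Fin r) A) : EReal :=
  ⨅ I : Fin r →₀ ℕ,
    (vJ J (MvPowerSeries.coeff I f) - ((ε * (I.sum fun _ n => (n : ℝ))) : ℝ))

/-- The weak completion `A^†` inside the `J`-adic completion (elements written as
convergent power series in the chosen generators): those `f` with `γ_ε(f) > −∞`
for some `ε > 0`. -/
def weakCompletion {A : Type*} [CommRing A] (J : Ideal A) (r : ℕ) :
    Set (MvPowerSeries (Fin r) A) :=
  {f | ∃ ε : ℝ, 0 < ε ∧ gaussNorm J ε f ≠ ⊥}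

/-!
A series lies in `A_ε` exactly when, for some real `c`, each coefficient `a_I` lies in
`J ^ ⌈c + ε |I|⌉`. Such bounds survive shrinking `ε` and `c`, so two elements of `A^†` share a
common `ε`. The coefficients of `f + g` then inherit the bound with `c = min c_f c_g`, and those of
`f * g`, being sums of `a_I b_K` with `I + K` fixed, the bound with `c = c_f + c_g`, because
`J ^ m * J ^ n = J ^ (m + n)` and `⌈x + y⌉ ≤ ⌈x⌉ + ⌈y⌉`.
-/

open MvPowerSeries

section JAdicValuation

variable {A : Type*} [CommRing A] {J : Ideal A} {a : A}

lemma coe_le_vJ_iff {x : ℝ} : (x : EReal) ≤ vJ J a ↔ a ∈ J ^ ⌈x⌉₊ := by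
  constructor
  · intro hx
    by_contra ha
    have hceil_pos : 0 < ⌈x⌉₊ := Nat.pos_of_ne_zero fun h0 => ha (by simp [h0])
    have hvJ_le : vJ J a ≤ ((⌈x⌉₊ - 1 : ℕ) : EReal) := by
      refine iSup_le ?_
      rintro ⟨m, hm⟩
      refine EReal.natCast_le_iff.mpr (show m ≤ ⌈x⌉₊ - 1 from ?_)
      by_contra! hlt
      exact ha (Ideal.pow_le_pow_right (by omega) hm)
    have hlt : (((⌈x⌉₊ - 1 : ℕ) : ℝ) : EReal) < x := by
      have := Nat.ceil_lt_add_one (Nat.ceil_pos.mp hceil_pos).le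
      exact EReal.coe_lt_coe_iff.mpr (by rw [Nat.cast_pred hceil_pos]; linarith)
    exact (hx.trans hvJ_le).not_gt hlt
  · intro ha
    calc (x : EReal) ≤ ((⌈x⌉₊ : ℝ) : EReal) := EReal.coe_le_coe_iff.mpr (Nat.le_ceil x)
      _ ≤ vJ J a := le_iSup (fun m : {m : ℕ // a ∈ J ^ m} => ((m : ℕ) : EReal)) ⟨_, ha⟩

end JAdicValuation

section GaussBound

variable {A : Type*} [CommRing A] (J : Ideal A) {r : ℕ}

/-- `γ_ε(f) ≥ c`, expressed through ideal membership of the coefficients. -/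
def GaussBoundedBy (ε c : ℝ) (f : MvPowerSeries (Fin r) A) : Prop :=
  ∀ I : Fin r →₀ ℕ, coeff I f ∈ J ^ ⌈c + ε * I.degree⌉₊

variable {J}

lemma gaussNorm_ne_bot_iff {ε : ℝ} {f : MvPowerSeries (Fin r) A} :
    gaussNorm J ε f ≠ ⊥ ↔ ∃ c : ℝ, GaussBoundedBy J ε c f := by
  have hterm : ∀ (c : ℝ) (I : Fin r →₀ ℕ),
      (c : EReal) ≤ vJ J (coeff I f) - ((ε * (I.sum fun _ n => (n : ℝ))) : ℝ) ↔
        coeff I f ∈ J ^ ⌈c + ε * I.degree⌉₊ := by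
    intro c I
    rw [EReal.le_sub_iff_add_le (Or.inl (EReal.coe_ne_bot _)) (Or.inl (EReal.coe_ne_top _)),
      ← EReal.coe_add, coe_le_vJ_iff, Finsupp.degree_apply, Nat.cast_sum]
    rfl
  constructor
  · intro hf
    obtain ⟨c, -, hc⟩ := EReal.exists_between_coe_real (bot_lt_iff_ne_bot.mpr hf)
    exact ⟨c, fun I => (hterm c I).mp (hc.le.trans (iInf_le _ I))⟩
  · rintro ⟨c, hc⟩
    refine ne_bot_of_le_ne_bot (EReal.coe_ne_bot c) (le_iInf fun I => ?_)
    exact (hterm c I).mpr (hc I)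

namespace GaussBoundedBy

variable {ε ε' c c' d : ℝ} {f g : MvPowerSeries (Fin r) A}

lemma mono (hε : ε ≤ ε') (hc : c ≤ c') (hf : GaussBoundedBy J ε' c' f) :
    GaussBoundedBy J ε c f := fun I => by
  have hdeg : ε * I.degree ≤ ε' * I.degree := by gcongr
  exact Ideal.pow_le_pow_right (Nat.ceil_mono (by linarith)) (hf I)

lemma add (hf : GaussBoundedBy J ε c f) (hg : GaussBoundedBy J ε c g) :
    GaussBoundedBy J ε c (f + g) := fun I => by
  rw [map_add]
  exact Ideal.add_mem _ (hf I) (hg I)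

lemma mul (hf : GaussBoundedBy J ε c f) (hg : GaussBoundedBy J ε d g) :
    GaussBoundedBy J ε (c + d) (f * g) := fun I => by
  rw [coeff_mul]
  refine Ideal.sum_mem _ fun ⟨K, L⟩ hKL => ?_
  rw [Finset.HasAntidiagonal.mem_antidiagonal] at hKL
  have hsplit : c + d + ε * I.degree = (c + ε * K.degree) + (d + ε * L.degree) := by
    rw [← hKL, map_add, Nat.cast_add]; ring
  refine Ideal.pow_le_pow_right ?_ (pow_add J _ _ ▸ Ideal.mul_mem_mul (hf K) (hg L))
  exact hsplit ▸ Nat.ceil_add_le _ _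

end GaussBoundedBy

lemma exists_gaussBoundedBy_of_mem_weakCompletion {f g : MvPowerSeries (Fin r) A}
    (hf : f ∈ weakCompletion J r) (hg : g ∈ weakCompletion J r) :
    ∃ ε > 0, ∃ c d : ℝ, GaussBoundedBy J ε c f ∧ GaussBoundedBy J ε d g := by
  obtain ⟨ε₁, hε₁, hf⟩ := hf
  obtain ⟨ε₂, hε₂, hg⟩ := hg
  obtain ⟨c, hc⟩ := gaussNorm_ne_bot_iff.mp hf
  obtain ⟨d, hd⟩ := gaussNorm_ne_bot_iff.mp hg
  exact ⟨min ε₁ ε₂, lt_min hε₁ hε₂, c, d,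
    hc.mono (min_le_left _ _) le_rfl, hd.mono (min_le_right _ _) le_rfl⟩

end GaussBound

theorem weakCompletion_subring_general {A : Type*} [CommRing A] (J : Ideal A) (r : ℕ)
    (f g : MvPowerSeries (Fin r) A)
    (hf : f ∈ weakCompletion J r) (hg : g ∈ weakCompletion J r) :
    f + g ∈ weakCompletion J r ∧ f * g ∈ weakCompletion J r := by
  obtain ⟨ε, hε, c, d, hfc, hgd⟩ := exists_gaussBoundedBy_of_mem_weakCompletion hf hg
  have hf' : GaussBoundedBy J ε (min c d) f := hfc.mono le_rfl (min_le_left c d)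
  have hg' : GaussBoundedBy J ε (min c d) g := hgd.mono le_rfl (min_le_right c d)
  exact ⟨⟨ε, hε, gaussNorm_ne_bot_iff.mpr ⟨_, hf'.add hg'⟩⟩,
    ⟨ε, hε, gaussNorm_ne_bot_iff.mpr ⟨_, hfc.mul hgd⟩⟩⟩

/-- the weak completion `A^†` is closed under addition and
multiplication, hence is a subring of the `J`-adic completion. -/
theorem weakCompletion_subring {A : Type*} [CommRing A] (J : Ideal A) (hJ : J.FG) (r : ℕ)
    (f g : MvPowerSeries (Fin r) A)
    (hf : f ∈ weakCompletion J r) (hg : g ∈ weakCompletion J r) :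
    f + g ∈ weakCompletion J r ∧ f * g ∈ weakCompletion J r :=
  weakCompletion_subring_general J r f g hf hg
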